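/- arXiv:2308.14684 — 2 statements merged into one kernel-verified Lean document; each statement's English description precedes it below -/
import Mathlib

section
/- Let X be a topological space, Z ⊆ X a closed subset, Y a metric space, and f : X → Y length-connected. A continuous map g : X → Y satisfies f ⊵ g (rel Z) — meaning g coincides with f on Z and ℓ_Y(g∘γ) ≤ ℓ_Y(f∘γ) for every curve γ in X — if and only if g is length-connected, coincides with f on Z, and ⟨x₁−x₂⟩_f ≥ ⟨x₁−x₂⟩_g for all x₁, x₂ ∈ X. -/
open Set Metric ENNReal unitInterval

noncomputable section

/-- The length of a curve parametrized by the unit interval, as total variation. -/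
def curveELength {Y : Type*} [PseudoEMetricSpace Y] (c : unitInterval → Y) : ℝ≥0∞ :=
  eVariationOn c Set.univ

/-- The length pseudodistance induced by a map `f : X → Y`: the infimum of the lengths of
`f ∘ γ` over all curves `γ` joining the two points (`⊤` if there is no such curve). -/
def lengthPd {X Y : Type*} [TopologicalSpace X] [PseudoEMetricSpace Y]
    (f : X → Y) (x z : X) : ℝ≥0∞ :=
  ⨅ γ : Path x z, curveELength (fun t => f (γ t))

/-- `f` is length-connected: the induced length pseudodistance is everywhere finite. -/
def LengthConnected {X Y : Type*} [TopologicalSpace X] [PseudoEMetricSpace Y]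
    (f : X → Y) : Prop :=
  ∀ x z : X, lengthPd f x z ≠ ⊤

/-- The connecting pseudodistance induced by `f`: infimum of `diam (f '' C)` over connected
sets `C` containing both points. -/
def connPd {X Y : Type*} [TopologicalSpace X] [PseudoEMetricSpace Y]
    (f : X → Y) (x z : X) : ℝ≥0∞ :=
  ⨅ C : {C : Set X // IsConnected C ∧ x ∈ C ∧ z ∈ C}, EMetric.diam (f '' (C : Set X))

/-- `g` does not increase the length of any curve, compared with `f`. -/
def IsShorter {X Y : Type*} [TopologicalSpace X] [PseudoEMetricSpace Y]
    (f g : X → Y) : Prop :=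
  ∀ c : C(unitInterval, X), curveELength (fun t => g (c t)) ≤ curveELength (fun t => f (c t))

/-- `f` is length-minimizing relative to `Z`: any continuous competitor agreeing with `f`
on `Z` and not increasing the length of any curve in fact preserves all curve lengths. -/
def LengthMinimizing {X Y : Type*} [TopologicalSpace X] [PseudoEMetricSpace Y]
    (f : X → Y) (Z : Set X) : Prop :=
  Continuous f ∧ ∀ g : X → Y, Continuous g → Set.EqOn f g Z → IsShorter f g →
    ∀ c : C(unitInterval, X), curveELength (fun t => g (c t)) = curveELength (fun t => f (c t))

/-- `γ : ℝ → Y` is a unit-speed geodesic from `x` to `y` (on `[0, dist x y]`). -/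
def IsGeodesicParam {Y : Type*} [MetricSpace Y] (γ : ℝ → Y) (x y : Y) : Prop :=
  γ 0 = x ∧ γ (dist x y) = y ∧
    ∀ s ∈ Set.Icc (0:ℝ) (dist x y), ∀ t ∈ Set.Icc (0:ℝ) (dist x y),
      dist (γ s) (γ t) = |s - t|

/-- A geodesic metric space: any two points are joined by a geodesic. -/
def IsGeodesicSpace (Y : Type*) [MetricSpace Y] : Prop :=
  ∀ x y : Y, ∃ γ : ℝ → Y, IsGeodesicParam γ x y

/-- The diameter `R_κ` of the model surface `M_κ`: `π/√κ` for `κ > 0`, `∞` otherwise. -/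
def modelDiam (κ : ℝ) : ℝ≥0∞ :=
  if κ ≤ 0 then ⊤ else ENNReal.ofReal (Real.pi / Real.sqrt κ)

/-- Cosine of the angle opposite the side of length `c` in a triangle of side lengths
`a`, `b`, `c` in the model plane of curvature `κ` (law of cosines). -/
def modelCosAngle (κ a b c : ℝ) : ℝ :=
  if κ = 0 then (a ^ 2 + b ^ 2 - c ^ 2) / (2 * a * b)
  else if 0 < κ then
    (Real.cos (Real.sqrt κ * c) - Real.cos (Real.sqrt κ * a) * Real.cos (Real.sqrt κ * b)) /
      (Real.sin (Real.sqrt κ * a) * Real.sin (Real.sqrt κ * b))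
  else
    (Real.cosh (Real.sqrt (-κ) * a) * Real.cosh (Real.sqrt (-κ) * b) -
        Real.cosh (Real.sqrt (-κ) * c)) /
      (Real.sinh (Real.sqrt (-κ) * a) * Real.sinh (Real.sqrt (-κ) * b))

/-- Distance in the model plane of curvature `κ` between the endpoints of two segments of
lengths `a` and `b` emanating from a common vertex at an angle with cosine `cosθ`. -/
def modelSideLength (κ a b cosθ : ℝ) : ℝ :=
  if κ = 0 then Real.sqrt (a ^ 2 + b ^ 2 - 2 * a * b * cosθ)
  else if 0 < κ then
    Real.arccos (Real.cos (Real.sqrt κ * a) * Real.cos (Real.sqrt κ * b) +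
      Real.sin (Real.sqrt κ * a) * Real.sin (Real.sqrt κ * b) * cosθ) / Real.sqrt κ
  else
    -- `Real.log (x + √(x² - 1))` is the inverse hyperbolic cosine `arcosh x`
    Real.log ((Real.cosh (Real.sqrt (-κ) * a) * Real.cosh (Real.sqrt (-κ) * b) -
        Real.sinh (Real.sqrt (-κ) * a) * Real.sinh (Real.sqrt (-κ) * b) * cosθ) +
      Real.sqrt ((Real.cosh (Real.sqrt (-κ) * a) * Real.cosh (Real.sqrt (-κ) * b) -
        Real.sinh (Real.sqrt (-κ) * a) * Real.sinh (Real.sqrt (-κ) * b) * cosθ) ^ 2 - 1)) /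
      Real.sqrt (-κ)

/-- `Y` is a CAT(κ) space: complete, geodesic, and every geodesic triangle of perimeter
`< 2 R_κ` satisfies the point-side comparison with its model triangle in `M_κ`. -/
def IsCATSpace (κ : ℝ) (Y : Type*) [MetricSpace Y] : Prop :=
  CompleteSpace Y ∧ IsGeodesicSpace Y ∧
    ∀ p q r : Y, ∀ γ : ℝ → Y, IsGeodesicParam γ p q →
      ENNReal.ofReal (dist p q + dist q r + dist r p) < 2 * modelDiam κ →
      ∀ s ∈ Set.Icc (0:ℝ) (dist p q),
        dist (γ s) r ≤
          modelSideLength κ s (dist p r) (modelCosAngle κ (dist p q) (dist p r) (dist q r))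

/-- A set is geodesically convex if every geodesic between its points stays inside it. -/
def IsGeodesicallyConvex {Y : Type*} [MetricSpace Y] (K : Set Y) : Prop :=
  ∀ x ∈ K, ∀ y ∈ K, ∀ γ : ℝ → Y, IsGeodesicParam γ x y →
    ∀ t ∈ Set.Icc (0:ℝ) (dist x y), γ t ∈ K

/-- A finite graph (connected finite one-dimensional CW complex) structure on a
topological space `Γ`: finitely many edges, injective away from endpoints, with
endpoints in a finite vertex set, covering `Γ`. -/
structure FiniteGraphStruct (Γ : Type*) [TopologicalSpace Γ] where
  n : ℕ
  edge : Fin n → C(unitInterval, Γ)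
  vertices : Set Γ
  vertices_finite : vertices.Finite
  endpoints_mem : ∀ i, edge i 0 ∈ vertices ∧ edge i 1 ∈ vertices
  inj_on : ∀ i, Set.InjOn (edge i) {t : unitInterval | t ≠ 0 ∧ t ≠ 1}
  cover : ∀ x : Γ, x ∈ vertices ∨ ∃ i t, edge i t = x

end

/- The `g`-length of a curve is at least the distance between the `g`-images of its endpoints.
So if `lengthPd g ≤ lengthPd f`, each chord of a partition of `g ∘ c` is bounded by the `f`-length
of the corresponding subarc of `c`, and additivity of the variation over adjacent intervals sums
these bounds to `ℓ(g ∘ c) ≤ ℓ(f ∘ c)`. -/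

theorem Set.Icc.monotone_convexComb {a b : ℝ} {x y : Icc a b} (hxy : x ≤ y) :
    Monotone (Icc.convexComb x y) := by
  intro s t hst
  rw [← Subtype.coe_le_coe] at hxy hst ⊢
  simp only [Icc.coe_convexComb]
  nlinarith

theorem eVariationOn_univ_le_of_edist_le {α E F : Type*} [LinearOrder α]
    [PseudoEMetricSpace E] [PseudoEMetricSpace F] {f : α → E} {g : α → F}
    (h : ∀ ⦃s t⦄, s ≤ t → edist (g s) (g t) ≤ eVariationOn f (Icc s t)) :
    eVariationOn g univ ≤ eVariationOn f univ := by
  refine iSup_le fun ⟨n, u, hu, _⟩ => ?_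
  calc ∑ i ∈ Finset.range n, edist (g (u (i + 1))) (g (u i))
      ≤ ∑ i ∈ Finset.range n, eVariationOn f (Icc (u i) (u (i + 1))) :=
        Finset.sum_le_sum fun i _ => edist_comm (g _) _ ▸ h (hu i.le_succ)
    _ = eVariationOn f (Icc (u 0) (u n)) := eVariationOn.sum' f hu
    _ ≤ eVariationOn f univ := eVariationOn.mono f (subset_univ _)

section LengthPd

variable {X Y : Type*} [TopologicalSpace X] [PseudoEMetricSpace Y]

theorem edist_le_lengthPd (g : X → Y) (x z : X) : edist (g x) (g z) ≤ lengthPd g x z :=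
  le_iInf fun γ => by
    simpa [curveELength] using eVariationOn.edist_le (fun t => g (γ t)) (mem_univ 0) (mem_univ 1)

theorem lengthPd_le_eVariationOn_Icc (f : X → Y) (c : C(I, X)) {a b : I} (hab : a ≤ b) :
    lengthPd f (c a) (c b) ≤ eVariationOn (fun t => f (c t)) (Icc a b) := by
  let γ : Path (c 0) (c 1) := ⟨c, rfl, rfl⟩
  calc lengthPd f (c a) (c b)
      ≤ curveELength (fun t => f (γ.subpath a b t)) := iInf_le _ (γ.subpath a b)
    _ ≤ eVariationOn (fun t => f (c t)) (Icc a b) :=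
        eVariationOn.comp_le_of_monotoneOn _ _ ((Icc.monotone_convexComb hab).monotoneOn _)
          fun t _ => ⟨Icc.le_convexComb hab t, Icc.convexComb_le hab t⟩

theorem LengthConnected.of_lengthPd_le {f g : X → Y} (hf : LengthConnected f)
    (h : ∀ x z, lengthPd g x z ≤ lengthPd f x z) : LengthConnected g :=
  fun x z => ne_top_of_le_ne_top (hf x z) (h x z)

theorem isShorter_iff_lengthPd_le {f g : X → Y} :
    IsShorter f g ↔ ∀ x z, lengthPd g x z ≤ lengthPd f x z := by
  refine ⟨fun h x z => iInf_mono fun γ => h γ.toContinuousMap, fun h c => ?_⟩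
  exact eVariationOn_univ_le_of_edist_le fun _ _ hst =>
    (edist_le_lengthPd g _ _).trans ((h _ _).trans (lengthPd_le_eVariationOn_Icc f c hst))

end LengthPd

theorem dominates_iff_general {X Y : Type*} [TopologicalSpace X] [MetricSpace Y]
    (Z : Set X) (f g : X → Y) (hlc : LengthConnected f) :
    (Set.EqOn f g Z ∧ IsShorter f g) ↔
      (LengthConnected g ∧ Set.EqOn f g Z ∧
        ∀ x₁ x₂ : X, lengthPd g x₁ x₂ ≤ lengthPd f x₁ x₂) := by
  rw [isShorter_iff_lengthPd_le]
  constructor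
  · rintro ⟨heq, hle⟩
    exact ⟨hlc.of_lengthPd_le hle, heq, hle⟩
  · rintro ⟨-, heq, hle⟩
    exact ⟨heq, hle⟩

/-- characterization of the relation `f ⊵ g (rel Z)` for a
length-connected map `f`. -/
theorem dominates_iff {X Y : Type*} [TopologicalSpace X] [MetricSpace Y]
    (Z : Set X) (hZ : IsClosed Z) (f g : X → Y) (hf : Continuous f)
    (hg : Continuous g) (hlc : LengthConnected f) :
    (Set.EqOn f g Z ∧ IsShorter f g) ↔
      (LengthConnected g ∧ Set.EqOn f g Z ∧
        ∀ x₁ x₂ : X, lengthPd g x₁ x₂ ≤ lengthPd f x₁ x₂) :=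
  dominates_iff_general Z f g hlc
end

section
/- Let Y be a CAT(κ) space and η₀, η₁ : [0,1] → Y rectifiable curves with d(η₀(a), η₁(a)) < R_κ − δ for all a and some δ > 0. Let f(a,t) = γ_a(t) be the ruled map where γ_a is the geodesic from η₀(a) to η₁(a) parametrized proportionally to arclength. Then there exist constants L, ρ > 0 such that whenever d(η_i(a), η_i(b)) ≤ ρ for i = 0,1, one has d(γ_a(t), γ_b(t)) ≤ L·(d(η₀(a), η₀(b)) + d(η₁(a), η₁(b))) for all t ∈ [0,1]. Consequently, every horizontal curve a ↦ f(a,t) has length at most L·(ℓ(η₀) + ℓ(η₁)). -/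
open Set Metric ENNReal unitInterval

/-!
Join `η₀ a` to `η₁ b` by a geodesic: this diagonal cuts the quadrilateral into two geodesic
triangles, and in each the two points to compare sit at the same fraction `t` along the two
sides issuing from a common vertex. CAT(κ) comparison, applied first point-to-side and then to
angles, bounds their distance by the corresponding distance in the model plane `M_κ`. There it
is at most `C` times the third side, with `C = 1` for `κ ≤ 0` and `C = π / (2 sin (√κ δ / 2))`
for `κ > 0` when the two sides stay `δ / 2` below `R_κ` (via `2θ/π ≤ sin θ ≤ θ`). For `κ > 0`,
endpoints that are far apart are handled by the triangle inequality, since all rulings are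
shorter than `R_κ`. The estimate thus holds for all `a, b`, and the length bound follows by
summing it over partitions.
-/

open Real

section Trigonometry

variable {E E' θ t : ℝ}

lemma cos_mul_cos_add_sin_mul_sin_mul (A B x : ℝ) :
    cos A * cos B + sin A * sin B * x = ((1 + x) * cos (A - B) + (1 - x) * cos (A + B)) / 2 := by
  rw [cos_sub, cos_add]; ring

lemma cosh_mul_cosh_sub_sinh_mul_sinh_mul (A B x : ℝ) :
    cosh A * cosh B - sinh A * sinh B * x =
      ((1 + x) * cosh (A - B) + (1 - x) * cosh (A + B)) / 2 := by
  rw [cosh_sub, cosh_add]; ring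

lemma cos_mul_cos_add_sin_mul_sin_mul_mem_Icc (A B : ℝ) {x : ℝ} (hx : |x| ≤ 1) :
    cos A * cos B + sin A * sin B * x ∈ Icc (-1) 1 := by
  obtain ⟨hx₁, hx₂⟩ := abs_le.1 hx
  rw [cos_mul_cos_add_sin_mul_sin_mul]
  constructor <;> nlinarith [neg_one_le_cos (A - B), cos_le_one (A - B),
    neg_one_le_cos (A + B), cos_le_one (A + B)]

lemma one_le_cosh_mul_cosh_sub_sinh_mul_sinh_mul {A B x : ℝ} (hA : 0 ≤ A) (hB : 0 ≤ B)
    (hx : x ≤ 1) : 1 ≤ cosh A * cosh B - sinh A * sinh B * x := by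
  nlinarith [cosh_sub A B, one_le_cosh (A - B),
    mul_nonneg (sinh_nonneg_iff.2 hA) (sinh_nonneg_iff.2 hB)]

lemma cos_mem_Icc_cos_add_cos_sub {A B C : ℝ} (h₁ : |A - B| ≤ C) (h₂ : C ≤ A + B)
    (h₃ : A + B + C ≤ 2 * π) : cos C ∈ Icc (cos (A + B)) (cos (A - B)) := by
  have hC : 0 ≤ C := (abs_nonneg _).trans h₁
  refine ⟨?_, ?_⟩
  · rcases le_or_gt (A + B) π with hπ | hπ
    · exact cos_le_cos_of_nonneg_of_le_pi hC hπ h₂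
    · rw [← cos_two_pi_sub]
      exact cos_le_cos_of_nonneg_of_le_pi hC (by linarith) (by linarith)
  · rw [← cos_abs (A - B)]
    exact cos_le_cos_of_nonneg_of_le_pi (abs_nonneg _) (by linarith) h₁

lemma cosh_mem_Icc_cosh_sub_cosh_add {A B C : ℝ} (h₁ : |A - B| ≤ C) (h₂ : C ≤ A + B) :
    cosh C ∈ Icc (cosh (A - B)) (cosh (A + B)) := by
  have hC : 0 ≤ C := (abs_nonneg _).trans h₁
  rw [mem_Icc, cosh_le_cosh, cosh_le_cosh, abs_of_nonneg hC, abs_of_nonneg (hC.trans h₂)]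
  exact ⟨h₁, h₂⟩

lemma one_sub_eq_two_mul_sin_sq_arccos (hE : E ∈ Icc (-1) 1) :
    1 - E = 2 * sin (arccos E / 2) ^ 2 := by
  have h := cos_two_mul_eq_one_sub (arccos E / 2)
  rw [mul_div_cancel₀ _ two_ne_zero, cos_arccos hE.1 hE.2] at h
  linarith

lemma two_mul_one_sub_le_sq_arccos (hE : E ∈ Icc (-1) 1) : 2 * (1 - E) ≤ arccos E ^ 2 := by
  have hθ := arccos_nonneg E
  have hs := sin_le (by positivity : 0 ≤ arccos E / 2)
  have hs₀ := sin_nonneg_of_nonneg_of_le_pi (x := arccos E / 2) (by positivity)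
    (by linarith [arccos_le_pi E, pi_pos])
  rw [one_sub_eq_two_mul_sin_sq_arccos hE]
  nlinarith

lemma sq_arccos_le (hE : E ∈ Icc (-1) 1) : arccos E ^ 2 ≤ π ^ 2 / 2 * (1 - E) := by
  have hθ := arccos_nonneg E
  have hs := mul_le_sin (by positivity : 0 ≤ arccos E / 2) (by linarith [arccos_le_pi E])
  have hs' := pow_le_pow_left₀ (by positivity) hs 2
  have e : (2 / π * (arccos E / 2)) ^ 2 * π ^ 2 = arccos E ^ 2 := by field_simp
  rw [one_sub_eq_two_mul_sin_sq_arccos hE]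
  nlinarith [mul_le_mul_of_nonneg_right hs' (sq_nonneg π)]

lemma arccos_le_mul_arccos (hE : E ∈ Icc (-1) 1) (hE' : E' ∈ Icc (-1) 1) {k : ℝ} (hk : 0 ≤ k)
    (h : 1 - E ≤ k ^ 2 * (1 - E')) : arccos E ≤ π / 2 * k * arccos E' := by
  have h₁ := sq_arccos_le hE
  have h₂ := two_mul_one_sub_le_sq_arccos hE'
  refine (sq_le_sq₀ (arccos_nonneg E) (by have := arccos_nonneg E'; positivity)).1 ?_
  calc arccos E ^ 2 ≤ π ^ 2 / 2 * (k ^ 2 * (1 - E')) := by nlinarith [pi_pos]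
    _ = π ^ 2 / 4 * k ^ 2 * (2 * (1 - E')) := by ring
    _ ≤ π ^ 2 / 4 * k ^ 2 * arccos E' ^ 2 := by gcongr
    _ = (π / 2 * k * arccos E') ^ 2 := by ring

lemma cos_le_cos_mul (ht : t ∈ Icc (0 : ℝ) 1) (hθ : |θ| ≤ π) : cos θ ≤ cos (t * θ) := by
  rw [← cos_abs θ, ← cos_abs (t * θ), abs_mul, abs_of_nonneg ht.1]
  exact cos_le_cos_of_nonneg_of_le_pi (mul_nonneg ht.1 (abs_nonneg θ)) hθ
    (mul_le_of_le_one_left (abs_nonneg θ) ht.2)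

lemma cosh_mul_le (θ : ℝ) (ht : t ∈ Icc (0 : ℝ) 1) : cosh (t * θ) ≤ cosh θ := by
  rw [cosh_le_cosh, abs_mul, abs_of_nonneg ht.1]
  exact mul_le_of_le_one_left (abs_nonneg θ) ht.2

lemma one_sub_cos_mul_le {m : ℝ} (hm : 0 < m) (hm' : m ≤ π / 2) (hθ₀ : 0 ≤ θ)
    (hθ : θ ≤ 2 * π - 2 * m) (ht : t ∈ Icc (0 : ℝ) 1) :
    1 - cos (t * θ) ≤ (sin m)⁻¹ ^ 2 * (1 - cos θ) := by
  have hsin : 0 < sin m := sin_pos_of_pos_of_lt_pi hm (by linarith [pi_pos])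
  rcases le_or_gt θ π with hθπ | hθπ
  · have := cos_le_cos_mul ht (by rwa [abs_of_nonneg hθ₀])
    have hk : 1 ≤ (sin m)⁻¹ ^ 2 := one_le_pow₀ ((one_le_inv₀ hsin).2 (sin_le_one m))
    nlinarith [cos_le_one θ]
  · -- `cos θ = cos (2π - θ) ≤ cos (2m) = 1 - 2 sin² m`
    have hcos : cos θ ≤ cos (2 * m) := by
      rw [← cos_two_pi_sub]
      exact cos_le_cos_of_nonneg_of_le_pi (by linarith) (by linarith) (by linarith)
    calc 1 - cos (t * θ) ≤ 2 := by linarith [neg_one_le_cos (t * θ)]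
      _ = (sin m)⁻¹ ^ 2 * (2 * sin m ^ 2) := by field_simp
      _ ≤ (sin m)⁻¹ ^ 2 * (1 - cos θ) := by
        gcongr; linarith [cos_two_mul_eq_one_sub m]

end Trigonometry

section ModelPlane

variable {κ a b c x δ : ℝ}

lemma modelSideLength_zero (a b x : ℝ) :
    modelSideLength 0 a b x = √(a ^ 2 + b ^ 2 - 2 * a * b * x) := by
  simp [modelSideLength]

lemma modelSideLength_of_pos (hκ : 0 < κ) (a b x : ℝ) :
    modelSideLength κ a b x =
      arccos (cos (√κ * a) * cos (√κ * b) + sin (√κ * a) * sin (√κ * b) * x) / √κ := by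
  simp [modelSideLength, hκ.ne', hκ]

lemma modelSideLength_of_neg (hκ : κ < 0) (a b x : ℝ) :
    modelSideLength κ a b x =
      arcosh (cosh (√(-κ) * a) * cosh (√(-κ) * b) - sinh (√(-κ) * a) * sinh (√(-κ) * b) * x) /
        √(-κ) := by
  simp only [modelSideLength, hκ.ne, hκ.not_gt, if_false]; rfl

lemma modelCosAngle_zero (a b c : ℝ) :
    modelCosAngle 0 a b c = (a ^ 2 + b ^ 2 - c ^ 2) / (2 * a * b) := by
  simp [modelCosAngle]

lemma modelCosAngle_of_pos (hκ : 0 < κ) (a b c : ℝ) :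
    modelCosAngle κ a b c =
      (cos (√κ * c) - cos (√κ * a) * cos (√κ * b)) / (sin (√κ * a) * sin (√κ * b)) := by
  simp [modelCosAngle, hκ.ne', hκ]

lemma modelCosAngle_of_neg (hκ : κ < 0) (a b c : ℝ) :
    modelCosAngle κ a b c =
      (cosh (√(-κ) * a) * cosh (√(-κ) * b) - cosh (√(-κ) * c)) /
        (sinh (√(-κ) * a) * sinh (√(-κ) * b)) := by
  simp [modelCosAngle, hκ.ne, hκ.not_gt]

lemma modelSideLength_comm (κ a b x : ℝ) : modelSideLength κ a b x = modelSideLength κ b a x := by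
  rcases lt_trichotomy κ 0 with hκ | rfl | hκ
  · simp only [modelSideLength_of_neg hκ, mul_comm (cosh (√(-κ) * a)), mul_comm (sinh (√(-κ) * a))]
  · simp only [modelSideLength_zero]; ring_nf
  · simp only [modelSideLength_of_pos hκ, mul_comm (cos (√κ * a)), mul_comm (sin (√κ * a))]

lemma sqrt_mul_modelSideLength_le_pi (hκ : 0 < κ) (a b x : ℝ) :
    √κ * modelSideLength κ a b x ≤ π := by
  rw [modelSideLength_of_pos hκ, mul_div_cancel₀ _ (sqrt_pos.2 hκ).ne']
  exact arccos_le_pi _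

lemma modelCosAngle_le_modelCosAngle {w₁ w₂ : ℝ} (ha : 0 ≤ a) (hb : 0 ≤ b) (hw₁ : 0 ≤ w₁)
    (hw : w₁ ≤ w₂) (hκa : 0 < κ → √κ * a ≤ π) (hκb : 0 < κ → √κ * b ≤ π)
    (hκw : 0 < κ → √κ * w₂ ≤ π) :
    modelCosAngle κ a b w₂ ≤ modelCosAngle κ a b w₁ := by
  rcases lt_trichotomy κ 0 with hκ | rfl | hκ
  · have hs := sqrt_nonneg (-κ)
    simp only [modelCosAngle_of_neg hκ]
    refine div_le_div_of_nonneg_right ?_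
      (mul_nonneg (sinh_nonneg_iff.2 (by positivity)) (sinh_nonneg_iff.2 (by positivity)))
    have : cosh (√(-κ) * w₁) ≤ cosh (√(-κ) * w₂) := by
      rw [cosh_le_cosh, abs_of_nonneg (by positivity),
        abs_of_nonneg (mul_nonneg hs (hw₁.trans hw))]
      gcongr
    linarith
  · simp only [modelCosAngle_zero]
    exact div_le_div_of_nonneg_right (by nlinarith) (by positivity)
  · have hs := sqrt_nonneg κ
    simp only [modelCosAngle_of_pos hκ]
    refine div_le_div_of_nonneg_right ?_ (mul_nonneg
      (sin_nonneg_of_nonneg_of_le_pi (by positivity) (hκa hκ))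
      (sin_nonneg_of_nonneg_of_le_pi (by positivity) (hκb hκ)))
    have := cos_le_cos_of_nonneg_of_le_pi (by positivity) (hκw hκ)
      (mul_le_mul_of_nonneg_left hw hs)
    linarith

lemma modelSideLength_le_modelSideLength {x₁ x₂ : ℝ} (ha : 0 ≤ a) (hb : 0 ≤ b) (hx : x₁ ≤ x₂)
    (hx₂ : κ < 0 → x₂ ≤ 1) (hκa : 0 < κ → √κ * a ≤ π) (hκb : 0 < κ → √κ * b ≤ π) :
    modelSideLength κ a b x₂ ≤ modelSideLength κ a b x₁ := by
  rcases lt_trichotomy κ 0 with hκ | rfl | hκ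
  · have hs := sqrt_nonneg (-κ)
    simp only [modelSideLength_of_neg hκ]
    have hA := sinh_nonneg_iff.2 (mul_nonneg hs ha)
    have hB := sinh_nonneg_iff.2 (mul_nonneg hs hb)
    have h₁ := one_le_cosh_mul_cosh_sub_sinh_mul_sinh_mul (mul_nonneg hs ha) (mul_nonneg hs hb)
      (hx₂ hκ)
    refine div_le_div_of_nonneg_right ((arcosh_le_arcosh (by linarith) ?_).2 ?_) hs
    all_goals nlinarith [mul_nonneg hA hB]
  · simp only [modelSideLength_zero]
    exact sqrt_le_sqrt (by nlinarith [mul_nonneg ha hb])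
  · have hs := sqrt_nonneg κ
    simp only [modelSideLength_of_pos hκ]
    refine div_le_div_of_nonneg_right (arccos_le_arccos ?_) hs
    nlinarith [mul_nonneg (sin_nonneg_of_nonneg_of_le_pi (by positivity) (hκa hκ))
      (sin_nonneg_of_nonneg_of_le_pi (by positivity) (hκb hκ))]

lemma modelCosAngle_modelSideLength (ha : 0 < a) (hb : 0 < b) (hx : |x| ≤ 1)
    (hκa : 0 < κ → √κ * a < π) (hκb : 0 < κ → √κ * b < π) :
    modelCosAngle κ a b (modelSideLength κ a b x) = x := by
  rcases lt_trichotomy κ 0 with hκ | rfl | hκ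
  · have hs := sqrt_pos.2 (neg_pos.2 hκ)
    have hA := sinh_pos_iff.2 (mul_pos hs ha)
    have hB := sinh_pos_iff.2 (mul_pos hs hb)
    rw [modelSideLength_of_neg hκ, modelCosAngle_of_neg hκ, mul_div_cancel₀ _ hs.ne',
      cosh_arcosh (one_le_cosh_mul_cosh_sub_sinh_mul_sinh_mul (by positivity) (by positivity)
        (abs_le.1 hx).2)]
    field_simp
    ring
  · rw [modelSideLength_zero, modelCosAngle_zero,
      sq_sqrt (by nlinarith [abs_le.1 hx, mul_pos ha hb, sq_nonneg (a - b)])]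
    field_simp
    ring
  · have hs := sqrt_pos.2 hκ
    have hA := sin_pos_of_pos_of_lt_pi (mul_pos hs ha) (hκa hκ)
    have hB := sin_pos_of_pos_of_lt_pi (mul_pos hs hb) (hκb hκ)
    obtain ⟨h₁, h₂⟩ := cos_mul_cos_add_sin_mul_sin_mul_mem_Icc (√κ * a) (√κ * b) hx
    rw [modelSideLength_of_pos hκ, modelCosAngle_of_pos hκ, mul_div_cancel₀ _ hs.ne',
      cos_arccos h₁ h₂]
    field_simp
    ring

lemma modelSideLength_modelCosAngle (ha : 0 < a) (hb : 0 < b) (hc : 0 ≤ c)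
    (hκa : 0 < κ → √κ * a < π) (hκb : 0 < κ → √κ * b < π) (hκc : 0 < κ → √κ * c ≤ π) :
    modelSideLength κ a b (modelCosAngle κ a b c) = c := by
  rcases lt_trichotomy κ 0 with hκ | rfl | hκ
  · have hs := sqrt_pos.2 (neg_pos.2 hκ)
    have hA := sinh_pos_iff.2 (mul_pos hs ha)
    have hB := sinh_pos_iff.2 (mul_pos hs hb)
    rw [modelSideLength_of_neg hκ, modelCosAngle_of_neg hκ]
    field_simp
    rw [show cosh (√(-κ) * a) * cosh (√(-κ) * b) -
        (cosh (√(-κ) * a) * cosh (√(-κ) * b) - cosh (√(-κ) * c)) = cosh (√(-κ) * c) by ring,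
      arcosh_cosh (by positivity)]
  · rw [modelSideLength_zero, modelCosAngle_zero]
    field_simp
    rw [show a ^ 2 + b ^ 2 - (a ^ 2 + b ^ 2 - c ^ 2) = c ^ 2 by ring, sqrt_sq hc]
  · have hs := sqrt_pos.2 hκ
    have hA := sin_pos_of_pos_of_lt_pi (mul_pos hs ha) (hκa hκ)
    have hB := sin_pos_of_pos_of_lt_pi (mul_pos hs hb) (hκb hκ)
    rw [modelSideLength_of_pos hκ, modelCosAngle_of_pos hκ]
    field_simp
    rw [show cos (√κ * a) * cos (√κ * b) + (cos (√κ * c) - cos (√κ * a) * cos (√κ * b)) =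
        cos (√κ * c) by ring, arccos_cos (by positivity) (hκc hκ)]

lemma abs_modelCosAngle_le_one (ha : 0 < a) (hb : 0 < b) (h₁ : |a - b| ≤ c) (h₂ : c ≤ a + b)
    (hper : 0 < κ → √κ * (a + b + c) < 2 * π) : |modelCosAngle κ a b c| ≤ 1 := by
  have hc : 0 ≤ c := (abs_nonneg _).trans h₁
  have h₁' : ∀ {s : ℝ}, 0 ≤ s → |s * a - s * b| ≤ s * c := fun hs => by
    rw [← mul_sub, abs_mul, abs_of_nonneg hs]; exact mul_le_mul_of_nonneg_left h₁ hs
  have h₂' : ∀ {s : ℝ}, 0 ≤ s → s * c ≤ s * a + s * b := fun hs => by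
    rw [← mul_add]; exact mul_le_mul_of_nonneg_left h₂ hs
  rcases lt_trichotomy κ 0 with hκ | rfl | hκ
  · have hs := sqrt_pos.2 (neg_pos.2 hκ)
    have hA := sinh_pos_iff.2 (mul_pos hs ha)
    have hB := sinh_pos_iff.2 (mul_pos hs hb)
    have hC := cosh_mem_Icc_cosh_sub_cosh_add (h₁' hs.le) (h₂' hs.le)
    rw [cosh_sub, cosh_add] at hC
    rw [modelCosAngle_of_neg hκ, abs_div, abs_of_pos (mul_pos hA hB), div_le_one (mul_pos hA hB),
      abs_le]
    constructor <;> linarith [hC.1, hC.2]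
  · have hlo := sq_le_sq' (abs_le.1 h₁).1 (abs_le.1 h₁).2
    have hup := pow_le_pow_left₀ hc h₂ 2
    rw [modelCosAngle_zero, abs_div, abs_of_pos (by positivity : (0 : ℝ) < 2 * a * b),
      div_le_one (by positivity), abs_le]
    constructor <;> nlinarith
  · have hs := sqrt_pos.2 hκ
    have hper := hper hκ
    rw [mul_add, mul_add] at hper
    have hA := sin_pos_of_pos_of_lt_pi (mul_pos hs ha)
      (by linarith [(abs_le.1 (h₁' hs.le)).2, h₂' hs.le])
    have hB := sin_pos_of_pos_of_lt_pi (mul_pos hs hb)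
      (by linarith [(abs_le.1 (h₁' hs.le)).1, h₂' hs.le])
    have hC := cos_mem_Icc_cos_add_cos_sub (h₁' hs.le) (h₂' hs.le) hper.le
    rw [cos_add, cos_sub] at hC
    rw [modelCosAngle_of_pos hκ, abs_div, abs_of_pos (mul_pos hA hB), div_le_one (mul_pos hA hB),
      abs_le]
    constructor <;> linarith [hC.1, hC.2]

lemma modelSideLength_mul_le_of_nonpos (hκ : κ ≤ 0) (ha : 0 ≤ a) (hb : 0 ≤ b) (hx : |x| ≤ 1)
    {t : ℝ} (ht : t ∈ Icc (0 : ℝ) 1) :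
    modelSideLength κ (t * a) (t * b) x ≤ modelSideLength κ a b x := by
  obtain ⟨hx₁, hx₂⟩ := abs_le.1 hx
  rcases hκ.lt_or_eq with hκ | rfl
  · simp only [modelSideLength_of_neg hκ, cosh_mul_cosh_sub_sinh_mul_sinh_mul]
    set A := √(-κ) * a
    set B := √(-κ) * b
    rw [show √(-κ) * (t * a) - √(-κ) * (t * b) = t * (A - B) by ring,
      show √(-κ) * (t * a) + √(-κ) * (t * b) = t * (A + B) by ring]
    have h₁ := cosh_mul_le (A - B) ht
    have h₂ := cosh_mul_le (A + B) ht
    refine div_le_div_of_nonneg_right ((arcosh_le_arcosh ?_ ?_).2 ?_) (sqrt_nonneg _)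
    · nlinarith [one_le_cosh (t * (A - B)), one_le_cosh (t * (A + B))]
    · nlinarith [one_le_cosh (A - B), one_le_cosh (A + B)]
    · nlinarith
  · simp only [modelSideLength_zero]
    rw [show (t * a) ^ 2 + (t * b) ^ 2 - 2 * (t * a) * (t * b) * x =
      t ^ 2 * (a ^ 2 + b ^ 2 - 2 * a * b * x) by ring]
    have hI : 0 ≤ a ^ 2 + b ^ 2 - 2 * a * b * x := by
      nlinarith [sq_nonneg (a - b), mul_le_mul_of_nonneg_left hx₂ (mul_nonneg ha hb)]
    exact sqrt_le_sqrt (mul_le_of_le_one_left hI (pow_le_one₀ ht.1 ht.2))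

lemma modelSideLength_mul_le_of_pos (hκ : 0 < κ) {m : ℝ} (hm : 0 < m) (hm' : m ≤ π / 2)
    (ha : 0 ≤ a) (hb : 0 ≤ b) (hκa : √κ * a ≤ π - m) (hκb : √κ * b ≤ π - m) (hx : |x| ≤ 1)
    {t : ℝ} (ht : t ∈ Icc (0 : ℝ) 1) :
    modelSideLength κ (t * a) (t * b) x ≤ π / (2 * sin m) * modelSideLength κ a b x := by
  obtain ⟨hx₁, hx₂⟩ := abs_le.1 hx
  have hs := sqrt_pos.2 hκ
  have hsin : 0 < sin m := sin_pos_of_pos_of_lt_pi hm (by linarith [pi_pos])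
  have hk : 1 ≤ (sin m)⁻¹ ^ 2 := one_le_pow₀ ((one_le_inv₀ hsin).2 (sin_le_one m))
  simp only [modelSideLength_of_pos hκ]
  set A := √κ * a
  set B := √κ * b
  rw [show √κ * (t * a) = t * A by ring, show √κ * (t * b) = t * B by ring]
  have hA : 0 ≤ A := by positivity
  have hB : 0 ≤ B := by positivity
  have hsub : 1 - cos (t * (A - B)) ≤ (sin m)⁻¹ ^ 2 * (1 - cos (A - B)) := by
    nlinarith [cos_le_cos_mul ht (abs_le.2 ⟨by linarith, by linarith⟩ : |A - B| ≤ π),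
      cos_le_one (A - B)]
  have hadd : 1 - cos (t * (A + B)) ≤ (sin m)⁻¹ ^ 2 * (1 - cos (A + B)) :=
    one_sub_cos_mul_le hm hm' (by positivity) (by linarith) ht
  have key : 1 - (cos (t * A) * cos (t * B) + sin (t * A) * sin (t * B) * x) ≤
      (sin m)⁻¹ ^ 2 * (1 - (cos A * cos B + sin A * sin B * x)) := by
    rw [cos_mul_cos_add_sin_mul_sin_mul, cos_mul_cos_add_sin_mul_sin_mul, ← mul_sub, ← mul_add]
    nlinarith [mul_le_mul_of_nonneg_left hsub (by linarith : 0 ≤ 1 + x),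
      mul_le_mul_of_nonneg_left hadd (by linarith : 0 ≤ 1 - x)]
  calc _ ≤ π / 2 * (sin m)⁻¹ * arccos (cos A * cos B + sin A * sin B * x) / √κ :=
        div_le_div_of_nonneg_right (arccos_le_mul_arccos
          (cos_mul_cos_add_sin_mul_sin_mul_mem_Icc _ _ hx)
          (cos_mul_cos_add_sin_mul_sin_mul_mem_Icc _ _ hx) (by positivity) key) hs.le
    _ = _ := by ring

lemma modelDiam_of_pos (hκ : 0 < κ) : modelDiam κ = ENNReal.ofReal (π / √κ) := by
  simp [modelDiam, hκ.not_ge]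

lemma modelDiam_of_nonpos (hκ : κ ≤ 0) : modelDiam κ = ⊤ := by
  simp [modelDiam, hκ]

lemma sqrt_mul_le_pi_of_le (hκ : 0 < κ) (h : a ≤ π / √κ) : √κ * a ≤ π := by
  rwa [mul_comm, ← le_div_iff₀ (sqrt_pos.2 hκ)]

lemma le_pi_div_sqrt_of_ofReal_le_modelDiam (hκ : 0 < κ) (h : ENNReal.ofReal a ≤ modelDiam κ) :
    a ≤ π / √κ := by
  rwa [modelDiam_of_pos hκ, ENNReal.ofReal_le_ofReal_iff (by positivity)] at h

lemma ofReal_lt_two_mul_modelDiam (h : 0 < κ → a < 2 * (π / √κ)) :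
    ENNReal.ofReal a < 2 * modelDiam κ := by
  rcases le_or_gt κ 0 with hκ | hκ
  · simp [modelDiam_of_nonpos hκ]
  · rw [modelDiam_of_pos hκ, ← ENNReal.ofReal_ofNat 2, ← ENNReal.ofReal_mul zero_le_two,
      ENNReal.ofReal_lt_ofReal_iff (by positivity)]
    exact h hκ

lemma sqrt_mul_lt_two_pi_of_ofReal_lt (hκ : 0 < κ) (h : ENNReal.ofReal a < 2 * modelDiam κ) :
    √κ * a < 2 * π := by
  have hs := sqrt_pos.2 hκ
  rw [modelDiam_of_pos hκ, ← ENNReal.ofReal_ofNat 2, ← ENNReal.ofReal_mul zero_le_two,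
    ENNReal.ofReal_lt_ofReal_iff (by positivity), mul_div_assoc', lt_div_iff₀ hs] at h
  linarith

/-- The constant of `modelSideLength_mul_le`, for apex sides staying `δ / 2` below `R_κ`. -/
noncomputable def modelScaleConst (κ δ : ℝ) : ℝ :=
  if 0 < κ then π / (2 * sin (√κ * δ / 2)) else 1

lemma one_le_modelScaleConst (hδ : 0 < δ) (hδκ : 0 < κ → δ ≤ π / √κ) : 1 ≤ modelScaleConst κ δ := by
  unfold modelScaleConst
  split_ifs with hκ
  · have hs := sqrt_pos.2 hκ
    have hδπ := sqrt_mul_le_pi_of_le hκ (hδκ hκ)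
    have hsin := sin_pos_of_pos_of_lt_pi (by positivity : 0 < √κ * δ / 2) (by linarith [pi_pos])
    rw [le_div_iff₀ (by positivity)]
    linarith [sin_le_one (√κ * δ / 2), pi_gt_three]
  · rfl

lemma modelSideLength_mul_le (hδ : 0 < δ) (hδκ : 0 < κ → δ ≤ π / √κ) (ha : 0 ≤ a) (hb : 0 ≤ b)
    (hκa : 0 < κ → a + δ / 2 ≤ π / √κ) (hκb : 0 < κ → b + δ / 2 ≤ π / √κ) (hx : |x| ≤ 1)
    {t : ℝ} (ht : t ∈ Icc (0 : ℝ) 1) :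
    modelSideLength κ (t * a) (t * b) x ≤ modelScaleConst κ δ * modelSideLength κ a b x := by
  unfold modelScaleConst
  split_ifs with hκ
  · have hδπ := sqrt_mul_le_pi_of_le hκ (hδκ hκ)
    have ha' := sqrt_mul_le_pi_of_le hκ (hκa hκ)
    have hb' := sqrt_mul_le_pi_of_le hκ (hκb hκ)
    rw [mul_add] at ha' hb'
    exact modelSideLength_mul_le_of_pos hκ (by have := sqrt_pos.2 hκ; positivity) (by linarith)
      ha hb (by linarith) (by linarith) hx ht
  · rw [one_mul]
    exact modelSideLength_mul_le_of_nonpos (not_lt.1 hκ) ha hb hx ht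

end ModelPlane

namespace IsGeodesicParam

variable {Y : Type*} [MetricSpace Y] {γ : ℝ → Y} {x y : Y} {s : ℝ}

lemma dist_left (h : IsGeodesicParam γ x y) (hs : s ∈ Icc 0 (dist x y)) : dist x (γ s) = s := by
  rw [← h.1, h.2.2 0 ⟨le_rfl, dist_nonneg⟩ s hs, zero_sub, abs_neg, abs_of_nonneg hs.1]

lemma dist_right (h : IsGeodesicParam γ x y) (hs : s ∈ Icc 0 (dist x y)) :
    dist (γ s) y = dist x y - s := by
  rw [← h.2.1, h.2.2 s hs _ ⟨dist_nonneg, le_rfl⟩, h.2.1, abs_of_nonpos (by linarith [hs.2])]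
  ring

lemma dist_left_mul (h : IsGeodesicParam γ x y) {t : ℝ} (ht : t ∈ Icc (0 : ℝ) 1) :
    dist x (γ (t * dist x y)) = t * dist x y :=
  h.dist_left ⟨mul_nonneg ht.1 dist_nonneg, mul_le_of_le_one_left dist_nonneg ht.2⟩

lemma reverse (h : IsGeodesicParam γ x y) : IsGeodesicParam (fun s => γ (dist x y - s)) y x := by
  refine ⟨by simpa using h.2.1, by simpa [dist_comm] using h.1, fun s hs t ht => ?_⟩
  rw [dist_comm y x] at hs ht
  rw [h.2.2 _ ⟨by linarith [hs.2], by linarith [hs.1]⟩ _ ⟨by linarith [ht.2], by linarith [ht.1]⟩,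
    abs_sub_comm]
  ring_nf

end IsGeodesicParam

section Triangle

variable {κ : ℝ} {Y : Type*} [MetricSpace Y] {p q r : Y}

lemma sqrt_mul_dist_lt_pi_of_perimeter (hκ : 0 < κ)
    (hper : ENNReal.ofReal (dist p q + dist q r + dist r p) < 2 * modelDiam κ) :
    √κ * dist p q < π ∧ √κ * dist q r < π ∧ √κ * dist p r < π := by
  have h := sqrt_mul_lt_two_pi_of_ofReal_lt hκ hper
  have h₁ := mul_le_mul_of_nonneg_left (dist_triangle p r q) (sqrt_nonneg κ)
  have h₂ := mul_le_mul_of_nonneg_left (dist_triangle q p r) (sqrt_nonneg κ)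
  have h₃ := mul_le_mul_of_nonneg_left (dist_triangle r q p) (sqrt_nonneg κ)
  rw [dist_comm r q, dist_comm p r, dist_comm q p] at *
  refine ⟨?_, ?_, ?_⟩ <;> nlinarith

lemma abs_modelCosAngle_dist_le_one
    (hper : ENNReal.ofReal (dist p q + dist q r + dist r p) < 2 * modelDiam κ)
    (hq : 0 < dist p q) (hr : 0 < dist p r) :
    |modelCosAngle κ (dist p q) (dist p r) (dist q r)| ≤ 1 := by
  refine abs_modelCosAngle_le_one hq hr ?_ ?_ fun hκ => ?_
  · simpa only [dist_comm q p, dist_comm r p] using abs_dist_sub_le q r p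
  · simpa only [dist_comm q p] using dist_triangle q p r
  · simpa only [dist_comm r p, add_right_comm] using sqrt_mul_lt_two_pi_of_ofReal_lt hκ hper

end Triangle

namespace IsCATSpace

variable {κ : ℝ} {Y : Type*} [MetricSpace Y] {p q r : Y} {γ γ' : ℝ → Y}

theorem modelCosAngle_le_modelCosAngle_dist (hY : IsCATSpace κ Y) (hγ : IsGeodesicParam γ p q)
    (hper : ENNReal.ofReal (dist p q + dist q r + dist r p) < 2 * modelDiam κ) {s : ℝ}
    (hs : s ∈ Ioc 0 (dist p q)) (hr : 0 < dist p r) :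
    modelCosAngle κ (dist p q) (dist p r) (dist q r) ≤
      modelCosAngle κ (dist p r) s (dist r (γ s)) := by
  have hsides := fun hκ => sqrt_mul_dist_lt_pi_of_perimeter hκ hper
  have hκs : 0 < κ → √κ * s < π := fun hκ =>
    (mul_le_mul_of_nonneg_left hs.2 (sqrt_nonneg κ)).trans_lt (hsides hκ).1
  have hκr : 0 < κ → √κ * dist p r < π := fun hκ => (hsides hκ).2.2
  set x₀ := modelCosAngle κ (dist p q) (dist p r) (dist q r)
  have hx₀ := abs_modelCosAngle_dist_le_one hper (hs.1.trans_le hs.2) hr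
  have hrx : dist r (γ s) ≤ modelSideLength κ (dist p r) s x₀ := by
    rw [dist_comm, modelSideLength_comm]
    exact hY.2.2 p q r γ hγ hper s ⟨hs.1.le, hs.2⟩
  calc x₀ = modelCosAngle κ (dist p r) s (modelSideLength κ (dist p r) s x₀) :=
        (modelCosAngle_modelSideLength hr hs.1 hx₀ hκr hκs).symm
    _ ≤ modelCosAngle κ (dist p r) s (dist r (γ s)) :=
        modelCosAngle_le_modelCosAngle hr.le hs.1.le dist_nonneg hrx (fun hκ => (hκr hκ).le)
          (fun hκ => (hκs hκ).le) (fun hκ => sqrt_mul_modelSideLength_le_pi hκ _ _ _)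

/-- Angle comparison, derived from the point-side comparison of `IsCATSpace`. -/
theorem dist_le_modelSideLength (hY : IsCATSpace κ Y) (hγ : IsGeodesicParam γ p q)
    (hγ' : IsGeodesicParam γ' p r)
    (hper : ENNReal.ofReal (dist p q + dist q r + dist r p) < 2 * modelDiam κ) {s s' : ℝ}
    (hs : s ∈ Ioc 0 (dist p q)) (hs' : s' ∈ Ioc 0 (dist p r)) :
    dist (γ s) (γ' s') ≤
      modelSideLength κ s s' (modelCosAngle κ (dist p q) (dist p r) (dist q r)) := by
  have hr : 0 < dist p r := hs'.1.trans_le hs'.2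
  have hsides := fun hκ => sqrt_mul_dist_lt_pi_of_perimeter hκ hper
  have hκs : 0 < κ → √κ * s ≤ π := fun hκ =>
    ((mul_le_mul_of_nonneg_left hs.2 (sqrt_nonneg κ)).trans_lt (hsides hκ).1).le
  have hκs' : 0 < κ → √κ * s' ≤ π := fun hκ =>
    ((mul_le_mul_of_nonneg_left hs'.2 (sqrt_nonneg κ)).trans_lt (hsides hκ).2.2).le
  set x := γ s
  have hpx : dist p x = s := hγ.dist_left ⟨hs.1.le, hs.2⟩
  have hrx : dist r x ≤ dist q r + (dist p q - s) := by
    linarith [dist_triangle r q x, dist_comm r q, dist_comm x q, hγ.dist_right ⟨hs.1.le, hs.2⟩]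
  have hrx₁ : |dist p r - s| ≤ dist r x := by
    simpa only [dist_comm r p, dist_comm x p, hpx] using abs_dist_sub_le r x p
  have hrx₂ : dist r x ≤ dist p r + s := by
    simpa only [dist_comm r p, hpx] using dist_triangle r p x
  have hper' : ENNReal.ofReal (dist p r + dist r x + dist x p) < 2 * modelDiam κ :=
    (ENNReal.ofReal_le_ofReal (by linarith [dist_comm x p, dist_comm r p])).trans_lt hper
  calc dist x (γ' s') = dist (γ' s') x := dist_comm _ _
    _ ≤ modelSideLength κ s' s (modelCosAngle κ (dist p r) s (dist r x)) := by
        simpa only [hpx] using hY.2.2 p r x γ' hγ' hper' s' ⟨hs'.1.le, hs'.2⟩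
    _ ≤ modelSideLength κ s' s (modelCosAngle κ (dist p q) (dist p r) (dist q r)) :=
        modelSideLength_le_modelSideLength hs'.1.le hs.1.le
          (hY.modelCosAngle_le_modelCosAngle_dist hγ hper hs hr)
          (fun hκ => (abs_le.1 (abs_modelCosAngle_le_one hr hs.1 hrx₁ hrx₂
            (fun hκ' => absurd hκ' hκ.not_gt))).2) hκs' hκs
    _ = _ := modelSideLength_comm _ _ _ _

theorem dist_le_mul_dist_of_scale (hY : IsCATSpace κ Y) (hγ : IsGeodesicParam γ p q)
    (hγ' : IsGeodesicParam γ' p r)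
    (hper : ENNReal.ofReal (dist p q + dist q r + dist r p) < 2 * modelDiam κ) {C : ℝ}
    (hC₁ : 1 ≤ C) (hC : ∀ x, |x| ≤ 1 → ∀ u ∈ Icc (0 : ℝ) 1,
      modelSideLength κ (u * dist p q) (u * dist p r) x ≤
        C * modelSideLength κ (dist p q) (dist p r) x)
    {t : ℝ} (ht : t ∈ Icc (0 : ℝ) 1) :
    dist (γ (t * dist p q)) (γ' (t * dist p r)) ≤ C * dist q r := by
  have hC₀ : 0 ≤ C := zero_le_one.trans hC₁
  rcases ht.1.eq_or_lt with rfl | ht₀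
  · rw [zero_mul, zero_mul, hγ.1, hγ'.1, dist_self]
    exact mul_nonneg hC₀ dist_nonneg
  rcases (dist_nonneg (x := p) (y := q)).eq_or_lt with hq | hq
  · obtain rfl := dist_eq_zero.1 hq.symm
    rw [← hq, mul_zero, hγ.1, hγ'.dist_left_mul ht]
    exact mul_le_mul_of_nonneg_right (ht.2.trans hC₁) dist_nonneg
  rcases (dist_nonneg (x := p) (y := r)).eq_or_lt with hr | hr
  · obtain rfl := dist_eq_zero.1 hr.symm
    rw [← hr, mul_zero, hγ'.1, dist_comm, hγ.dist_left_mul ht, dist_comm q p]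
    exact mul_le_mul_of_nonneg_right (ht.2.trans hC₁) dist_nonneg
  have hsides := fun hκ => sqrt_mul_dist_lt_pi_of_perimeter hκ hper
  calc dist (γ (t * dist p q)) (γ' (t * dist p r))
      ≤ modelSideLength κ (t * dist p q) (t * dist p r)
          (modelCosAngle κ (dist p q) (dist p r) (dist q r)) :=
        hY.dist_le_modelSideLength hγ hγ' hper
          ⟨mul_pos ht₀ hq, mul_le_of_le_one_left hq.le ht.2⟩
          ⟨mul_pos ht₀ hr, mul_le_of_le_one_left hr.le ht.2⟩
    _ ≤ C * modelSideLength κ (dist p q) (dist p r)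
          (modelCosAngle κ (dist p q) (dist p r) (dist q r)) :=
        hC _ (abs_modelCosAngle_dist_le_one hper hq hr) t ht
    _ = C * dist q r := by
        rw [modelSideLength_modelCosAngle hq hr dist_nonneg (fun hκ => (hsides hκ).1)
          (fun hκ => (hsides hκ).2.2)
          (fun hκ => (hsides hκ).2.1.le)]

theorem dist_le_modelScaleConst_mul (hY : IsCATSpace κ Y) {x₀ y₀ x₁ y₁ : Y} {γ₀ γ₁ : ℝ → Y}
    (h₀ : IsGeodesicParam γ₀ x₀ y₀) (h₁ : IsGeodesicParam γ₁ x₁ y₁) {δ : ℝ} (hδ : 0 < δ)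
    (hd₀ : 0 < κ → dist x₀ y₀ + δ ≤ π / √κ) (hd₁ : 0 < κ → dist x₁ y₁ + δ ≤ π / √κ)
    (hx : 0 < κ → dist x₀ x₁ ≤ δ / 2) (hy : 0 < κ → dist y₀ y₁ ≤ δ / 2)
    {t : ℝ} (ht : t ∈ Icc (0 : ℝ) 1) :
    dist (γ₀ (t * dist x₀ y₀)) (γ₁ (t * dist x₁ y₁)) ≤
      modelScaleConst κ δ * (dist x₀ x₁ + dist y₀ y₁) := by
  obtain ⟨γ, hγ⟩ := hY.2.1 x₀ y₁
  have hδκ : 0 < κ → δ ≤ π / √κ := fun hκ => by linarith [hd₀ hκ, dist_nonneg (x := x₀) (y := y₀)]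
  have hC₁ := one_le_modelScaleConst hδ hδκ
  have he₀ : dist x₀ y₁ ≤ dist x₀ y₀ + dist y₀ y₁ := dist_triangle _ _ _
  have he₁ : dist x₀ y₁ ≤ dist x₀ x₁ + dist x₁ y₁ := dist_triangle _ _ _
  have k₀ : dist (γ₀ (t * dist x₀ y₀)) (γ (t * dist x₀ y₁)) ≤ modelScaleConst κ δ * dist y₀ y₁ :=
    hY.dist_le_mul_dist_of_scale h₀ hγ
      (ofReal_lt_two_mul_modelDiam fun hκ => by linarith [hd₀ hκ, hy hκ, dist_comm y₁ x₀]) hC₁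
      (fun _ hx u hu => modelSideLength_mul_le hδ hδκ dist_nonneg dist_nonneg
        (fun hκ => by linarith [hd₀ hκ]) (fun hκ => by linarith [hd₀ hκ, hy hκ]) hx hu) ht
  have k₁ : dist (γ (t * dist x₀ y₁)) (γ₁ (t * dist x₁ y₁)) ≤ modelScaleConst κ δ * dist x₀ x₁ := by
    have k := hY.dist_le_mul_dist_of_scale hγ.reverse h₁.reverse
      (ofReal_lt_two_mul_modelDiam fun hκ => by linarith [hd₁ hκ, hx hκ, dist_comm y₁ x₀]) hC₁
      (fun _ hx' u hu => modelSideLength_mul_le hδ hδκ dist_nonneg dist_nonneg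
        (fun hκ => by linarith [hd₁ hκ, hx hκ, dist_comm y₁ x₀])
        (fun hκ => by linarith [hd₁ hκ, dist_comm y₁ x₁]) hx' hu)
      ⟨sub_nonneg.2 ht.2, sub_le_self 1 ht.1⟩
    have e : ∀ d : ℝ, d - (1 - t) * d = t * d := fun d => by ring
    simpa only [dist_comm y₁, e] using k
  calc dist (γ₀ (t * dist x₀ y₀)) (γ₁ (t * dist x₁ y₁))
      ≤ dist (γ₀ (t * dist x₀ y₀)) (γ (t * dist x₀ y₁)) +
          dist (γ (t * dist x₀ y₁)) (γ₁ (t * dist x₁ y₁)) := dist_triangle _ _ _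
    _ ≤ modelScaleConst κ δ * dist y₀ y₁ + modelScaleConst κ δ * dist x₀ x₁ := add_le_add k₀ k₁
    _ = modelScaleConst κ δ * (dist x₀ x₁ + dist y₀ y₁) := by ring

theorem exists_dist_le_mul (hY : IsCATSpace κ Y) {δ : ℝ} (hδ : 0 < δ) :
    ∃ L > 0, ∀ {x₀ y₀ x₁ y₁ : Y} {γ₀ γ₁ : ℝ → Y},
      IsGeodesicParam γ₀ x₀ y₀ → IsGeodesicParam γ₁ x₁ y₁ →
      ENNReal.ofReal (dist x₀ y₀ + δ) ≤ modelDiam κ →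
      ENNReal.ofReal (dist x₁ y₁ + δ) ≤ modelDiam κ → ∀ t ∈ Icc (0 : ℝ) 1,
      dist (γ₀ (t * dist x₀ y₀)) (γ₁ (t * dist x₁ y₁)) ≤ L * (dist x₀ x₁ + dist y₀ y₁) := by
  by_cases hκ : 0 < κ
  swap
  · refine ⟨1, one_pos, fun h₀ h₁ _ _ t ht => ?_⟩
    simpa [modelScaleConst, hκ] using hY.dist_le_modelScaleConst_mul h₀ h₁ hδ (absurd · hκ)
      (absurd · hκ) (absurd · hκ) (absurd · hκ) ht
  set R := π / √κ
  have hR : 0 < R := by have := sqrt_pos.2 hκ; positivity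
  refine ⟨max (modelScaleConst κ δ) (1 + 4 * R / δ), lt_max_of_lt_right (by positivity), ?_⟩
  intro x₀ y₀ x₁ y₁ γ₀ γ₁ h₀ h₁ hd₀ hd₁ t ht
  have hd₀ := le_pi_div_sqrt_of_ofReal_le_modelDiam hκ hd₀
  have hd₁ := le_pi_div_sqrt_of_ofReal_le_modelDiam hκ hd₁
  have hD : 0 ≤ dist x₀ x₁ + dist y₀ y₁ := by positivity
  by_cases hnear : dist x₀ x₁ ≤ δ / 2 ∧ dist y₀ y₁ ≤ δ / 2
  · exact (hY.dist_le_modelScaleConst_mul h₀ h₁ hδ (fun _ => hd₀) (fun _ => hd₁)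
      (fun _ => hnear.1) (fun _ => hnear.2) ht).trans
      (mul_le_mul_of_nonneg_right (le_max_left _ _) hD)
  -- far apart endpoints: go through `x₀` and `x₁`, as both geodesics are shorter than `R`
  have hfar : δ / 2 < dist x₀ x₁ + dist y₀ y₁ := by
    rw [not_and_or, not_le, not_le] at hnear
    rcases hnear with h | h <;>
      linarith [dist_nonneg (x := x₀) (y := x₁), dist_nonneg (x := y₀) (y := y₁)]
  have h2R : 2 * R ≤ 4 * R / δ * (dist x₀ x₁ + dist y₀ y₁) := by
    rw [div_mul_eq_mul_div, le_div_iff₀ hδ]; nlinarith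
  calc dist (γ₀ (t * dist x₀ y₀)) (γ₁ (t * dist x₁ y₁))
      ≤ dist (γ₀ (t * dist x₀ y₀)) x₀ + dist x₀ x₁ + dist x₁ (γ₁ (t * dist x₁ y₁)) :=
        dist_triangle4 _ _ _ _
    _ ≤ R + dist x₀ x₁ + R := by
        rw [dist_comm, h₀.dist_left_mul ht, h₁.dist_left_mul ht]
        gcongr
        · linarith [mul_le_of_le_one_left (dist_nonneg (x := x₀) (y := y₀)) ht.2]
        · linarith [mul_le_of_le_one_left (dist_nonneg (x := x₁) (y := y₁)) ht.2]
    _ ≤ (1 + 4 * R / δ) * (dist x₀ x₁ + dist y₀ y₁) := by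
        nlinarith [dist_nonneg (x := y₀) (y := y₁)]
    _ ≤ _ := mul_le_mul_of_nonneg_right (le_max_right _ _) hD

end IsCATSpace

lemma exists_isGeodesicParam_of_dist_eq {Y : Type*} [MetricSpace Y] {c : unitInterval → Y}
    {x y : Y} (h0 : c 0 = x) (h1 : c 1 = y)
    (hc : ∀ s t : unitInterval, dist (c s) (c t) = |(s : ℝ) - t| * dist x y) :
    ∃ γ : ℝ → Y, IsGeodesicParam γ x y ∧ ∀ t : unitInterval, γ (t * dist x y) = c t := by
  rcases (dist_nonneg (x := x) (y := y)).eq_or_lt with hxy | hxy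
  · have hc' : ∀ t, c t = x := fun t => by
      rw [← h0]; exact dist_eq_zero.1 (by rw [hc, ← hxy, mul_zero])
    refine ⟨fun _ => x, ⟨rfl, by rw [← h1, hc'], fun s hs t ht => ?_⟩, fun t => (hc' t).symm⟩
    rw [← hxy] at hs ht
    rw [le_antisymm hs.2 hs.1, le_antisymm ht.2 ht.1, dist_self, sub_self, abs_zero]
  refine ⟨fun s => c (projIcc 0 1 zero_le_one (s / dist x y)), ⟨?_, ?_, fun s hs t ht => ?_⟩,
    fun t => ?_⟩
  · simpa [zero_div] using h0
  · simpa [hxy.ne'] using h1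
  · have hmem : ∀ u ∈ Icc 0 (dist x y), u / dist x y ∈ Icc (0 : ℝ) 1 := fun u hu =>
      ⟨div_nonneg hu.1 hxy.le, (div_le_one hxy).2 hu.2⟩
    simp only
    rw [projIcc_of_mem _ (hmem s hs), projIcc_of_mem _ (hmem t ht), hc, ← sub_div, abs_div,
      abs_of_pos hxy, div_mul_cancel₀ _ hxy.ne']
  · simp [hxy.ne']

lemma eVariationOn_le_mul_add {α E F G : Type*} [LinearOrder α] [PseudoEMetricSpace E]
    [PseudoEMetricSpace F] [PseudoEMetricSpace G] {f : α → E} {g : α → F} {h : α → G} {L : ℝ≥0∞}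
    (hf : ∀ a b, edist (f a) (f b) ≤ L * (edist (g a) (g b) + edist (h a) (h b))) (s : Set α) :
    eVariationOn f s ≤ L * (eVariationOn g s + eVariationOn h s) := by
  refine iSup_le fun ⟨n, u, hu, us⟩ => ?_
  calc ∑ i ∈ Finset.range n, edist (f (u (i + 1))) (f (u i))
      ≤ ∑ i ∈ Finset.range n,
          L * (edist (g (u (i + 1))) (g (u i)) + edist (h (u (i + 1))) (h (u i))) :=
        Finset.sum_le_sum fun i _ => hf _ _
    _ = L * (∑ i ∈ Finset.range n, edist (g (u (i + 1))) (g (u i)) +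
          ∑ i ∈ Finset.range n, edist (h (u (i + 1))) (h (u i))) := by
        rw [← Finset.mul_sum, Finset.sum_add_distrib]
    _ ≤ L * (eVariationOn g s + eVariationOn h s) := by
        gcongr <;> exact eVariationOn.sum_le hu us

theorem ruled_map_quantitative_general {Y : Type*} [MetricSpace Y] (κ : ℝ)
    (hY : IsCATSpace κ Y) (η₀ η₁ : unitInterval → Y)
    (δ : ℝ) (hδ : 0 < δ)
    (hd : ∀ a : unitInterval,
      ENNReal.ofReal (dist (η₀ a) (η₁ a) + δ) ≤ modelDiam κ)
    (F : unitInterval × unitInterval → Y)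
    (hF0 : ∀ a : unitInterval, F (a, 0) = η₀ a)
    (hF1 : ∀ a : unitInterval, F (a, 1) = η₁ a)
    (hgeo : ∀ a s t : unitInterval,
      dist (F (a, s)) (F (a, t)) = |(s : ℝ) - (t : ℝ)| * dist (η₀ a) (η₁ a)) :
    ∃ L ρ : ℝ, 0 < L ∧ 0 < ρ ∧
      (∀ a b : unitInterval, dist (η₀ a) (η₀ b) ≤ ρ → dist (η₁ a) (η₁ b) ≤ ρ →
        ∀ t : unitInterval,
          dist (F (a, t)) (F (b, t)) ≤
            L * (dist (η₀ a) (η₀ b) + dist (η₁ a) (η₁ b))) ∧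
      ∀ t : unitInterval,
        curveELength (fun a => F (a, t)) ≤
          ENNReal.ofReal L * (curveELength η₀ + curveELength η₁) := by
  choose γ hγ hγF using fun a => exists_isGeodesicParam_of_dist_eq (hF0 a) (hF1 a) (hgeo a)
  obtain ⟨L, hL, hLip⟩ := hY.exists_dist_le_mul hδ
  have hF : ∀ a b t, dist (F (a, t)) (F (b, t)) ≤ L * (dist (η₀ a) (η₀ b) + dist (η₁ a) (η₁ b)) :=
    fun a b t => by
      rw [← hγF a t, ← hγF b t]
      exact hLip (hγ a) (hγ b) (hd a) (hd b) t t.2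
  refine ⟨L, 1, hL, one_pos, fun a b _ _ t => hF a b t, fun t => ?_⟩
  refine eVariationOn_le_mul_add (fun a b => ?_) univ
  rw [edist_dist, edist_dist, edist_dist, ← ENNReal.ofReal_add dist_nonneg dist_nonneg,
    ← ENNReal.ofReal_mul hL.le]
  exact ENNReal.ofReal_le_ofReal (hF a b t)

/-- quantitative Lipschitz comparison for ruled maps between rectifiable
curves whose rulings have length bounded away from `R_κ`. -/
theorem ruled_map_quantitative {Y : Type*} [MetricSpace Y] (κ : ℝ)
    (hY : IsCATSpace κ Y) (η₀ η₁ : unitInterval → Y)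
    (hη₀ : Continuous η₀) (hη₁ : Continuous η₁)
    (hr₀ : curveELength η₀ ≠ ⊤) (hr₁ : curveELength η₁ ≠ ⊤)
    (δ : ℝ) (hδ : 0 < δ)
    (hd : ∀ a : unitInterval,
      ENNReal.ofReal (dist (η₀ a) (η₁ a) + δ) ≤ modelDiam κ)
    (F : unitInterval × unitInterval → Y)
    (hF0 : ∀ a : unitInterval, F (a, 0) = η₀ a)
    (hF1 : ∀ a : unitInterval, F (a, 1) = η₁ a)
    (hgeo : ∀ a s t : unitInterval,
      dist (F (a, s)) (F (a, t)) = |(s : ℝ) - (t : ℝ)| * dist (η₀ a) (η₁ a)) :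
    ∃ L ρ : ℝ, 0 < L ∧ 0 < ρ ∧
      (∀ a b : unitInterval, dist (η₀ a) (η₀ b) ≤ ρ → dist (η₁ a) (η₁ b) ≤ ρ →
        ∀ t : unitInterval,
          dist (F (a, t)) (F (b, t)) ≤
            L * (dist (η₀ a) (η₀ b) + dist (η₁ a) (η₁ b))) ∧
      ∀ t : unitInterval,
        curveELength (fun a => F (a, t)) ≤
          ENNReal.ofReal L * (curveELength η₀ + curveELength η₁) :=
  ruled_map_quantitative_general κ hY η₀ η₁ δ hδ hd F hF0 hF1 hgeo
end
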